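/- Let G be a metric ATSP instance on vertex set V and let M be obtained from G by a sequence of edge contractions, where contracting (u,v) merges u,v into a single vertex uv with c(w,uv) = min(c(w,u), c(w,v)) and c(uv,w) = min(c(u,w), c(v,w)) for all other w. Then the minimum tour cost of M is at most the minimum tour cost of G. -/

import Mathlib

/-- Cost of traversing a list cyclically (wrapping around at the end). -/
def cycleCost {V : Type*} (c : V → V → ℝ) (l : List V) : ℝ :=
  ∑ i : Fin l.length, c (l.get i) (l.get ⟨((i : ℕ) + 1) % l.length, Nat.mod_lt _ i.pos⟩)

/-- The set of costs of Hamiltonian cycles (tours) on a finset `S`. -/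
def tourCosts {V : Type*} [DecidableEq V] (c : V → V → ℝ) (S : Finset V) : Set ℝ :=
  {x | ∃ l : List V, l.Nodup ∧ l.toFinset = S ∧ cycleCost c l = x}

/-!
Send every vertex `v` to a block `f v` containing it, so that `d (f u) (f v) ≤ c u v`. Mapping a
tour of `G` through `f` and erasing repeated blocks (keeping last occurrences) gives a tour of `M`.
Each erased vertex is shortcut, which by the triangle inequality for `c` does not increase the cost,
and every remaining edge costs in `M` at most what it cost in `G`.
-/

def pathCost {V : Type*} (c : V → V → ℝ) : List V → ℝ
  | a :: b :: t => c a b + pathCost c (b :: t)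
  | _ => 0

section Lists

variable {V : Type*}

lemma pathCost_cons_cons (c : V → V → ℝ) (a b : V) (t : List V) :
    pathCost c (a :: b :: t) = c a b + pathCost c (b :: t) := rfl

lemma pathCost_eq_sum (c : V → V → ℝ) :
    ∀ (a : V) (t : List V), pathCost c (a :: t) =
      ∑ i : Fin t.length, c ((a :: t).get i.castSucc) ((a :: t).get i.succ)
  | a, [] => by simp [pathCost]
  | a, b :: s => by
    rw [pathCost_cons_cons, pathCost_eq_sum c b s]
    exact (Fin.sum_univ_succ fun i : Fin (s.length + 1) =>
      c ((a :: b :: s).get i.castSucc) ((a :: b :: s).get i.succ)).symm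

lemma cycleCost_eq_pathCost_getLast (c : V → V → ℝ) (l : List V) (hl : l ≠ []) :
    cycleCost c l = pathCost c (l.getLast hl :: l) := by
  obtain ⟨a, t, rfl⟩ := List.exists_cons_of_ne_nil hl
  rw [pathCost_cons_cons, pathCost_eq_sum, cycleCost, add_comm]
  simp only [List.length_cons]
  rw [Fin.sum_univ_castSucc]
  congr 1
  · refine Finset.sum_congr rfl fun i _ => ?_
    simp [Nat.mod_eq_of_lt (Nat.succ_lt_succ i.isLt)]
  · simp [List.getLast_eq_getElem]

lemma getLast_dedup [DecidableEq V] :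
    ∀ (l : List V) (h : l.dedup ≠ []), l.dedup.getLast h = l.getLast (by simpa using h)
  | [a], _ => by simp
  | a :: b :: t, h => by
    have hne : (b :: t).dedup ≠ [] := by simp
    by_cases hm : a ∈ b :: t
    · rw [List.getLast_congr _ hne (List.dedup_cons_of_mem hm), getLast_dedup _ hne,
        List.getLast_cons_cons]
    · rw [List.getLast_congr _ (List.cons_ne_nil _ _) (List.dedup_cons_of_notMem hm),
        List.getLast_cons hne, getLast_dedup _ hne, List.getLast_cons_cons]

end Lists

section Contraction

variable {V W : Type*} [DecidableEq W] {c : V → V → ℝ} {d : W → W → ℝ} {f : V → W}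

lemma pathCost_le_cons_pathCost (htri : ∀ u v w, c u w ≤ c u v + c v w) (u a : V)
    (t : List V) (ht : t ≠ []) : pathCost c (u :: t) ≤ c u a + pathCost c (a :: t) := by
  obtain ⟨b, s, rfl⟩ := List.exists_cons_of_ne_nil ht
  simp only [pathCost_cons_cons]
  linarith [htri u a b]

lemma pathCost_cons_dedup_map_le (htri : ∀ u v w, c u w ≤ c u v + c v w)
    (hdc : ∀ u v, d (f u) (f v) ≤ c u v) :
    ∀ (l : List V) (u : V), pathCost d (f u :: (l.map f).dedup) ≤ pathCost c (u :: l)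
  | [], u => by simp [pathCost]
  | a :: t, u => by
    by_cases hm : f a ∈ t.map f
    · -- `a` is skipped: go from `u` straight to the successor of `a`.
      have ht : t ≠ [] := by rintro rfl; simp at hm
      rw [List.map_cons, List.dedup_cons_of_mem hm]
      exact (pathCost_cons_dedup_map_le htri hdc t u).trans
        (pathCost_le_cons_pathCost htri u a t ht)
    · rw [List.map_cons, List.dedup_cons_of_notMem hm, pathCost_cons_cons, pathCost_cons_cons]
      exact add_le_add (hdc u a) (pathCost_cons_dedup_map_le htri hdc t a)

lemma cycleCost_dedup_map_le (htri : ∀ u v w, c u w ≤ c u v + c v w)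
    (hdc : ∀ u v, d (f u) (f v) ≤ c u v) (l : List V) :
    cycleCost d (l.map f).dedup ≤ cycleCost c l := by
  rcases eq_or_ne l [] with rfl | hl
  · exact le_of_eq rfl
  have hL : (l.map f).dedup ≠ [] := by simpa using hl
  rw [cycleCost_eq_pathCost_getLast _ _ hL, cycleCost_eq_pathCost_getLast _ _ hl,
    getLast_dedup, List.getLast_map]
  exact pathCost_cons_dedup_map_le htri hdc l _

end Contraction

lemma tourCosts_finite {V : Type*} [DecidableEq V] (c : V → V → ℝ) (S : Finset V) :
    (tourCosts c S).Finite := by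
  refine (List.finite_toSet (S.toList.permutations.map (cycleCost c))).subset ?_
  rintro _ ⟨l, hl, hlS, rfl⟩
  refine List.mem_map_of_mem (List.mem_permutations.2 ?_)
  exact List.perm_of_nodup_nodup_toFinset_eq hl S.nodup_toList (by simpa using hlS)

theorem sInf_tourCosts_le_of_surjective {V W : Type*} [Fintype V] [DecidableEq V] [Fintype W]
    [DecidableEq W] {c : V → V → ℝ} {d : W → W → ℝ} {f : V → W}
    (htri : ∀ u v w, c u w ≤ c u v + c v w) (hdc : ∀ u v, d (f u) (f v) ≤ c u v)
    (hf : Function.Surjective f) :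
    sInf (tourCosts d Finset.univ) ≤ sInf (tourCosts c Finset.univ) := by
  refine le_csInf ⟨_, Finset.univ.toList, Finset.nodup_toList _, by simp, rfl⟩ ?_
  rintro _ ⟨l, -, hl, rfl⟩
  have hmem : cycleCost d (l.map f).dedup ∈ tourCosts d Finset.univ := by
    refine ⟨_, List.nodup_dedup _, Finset.eq_univ_of_forall fun w => ?_, rfl⟩
    obtain ⟨v, rfl⟩ := hf w
    have hv : v ∈ l := by simp [← List.mem_toFinset, hl]
    simpa using ⟨v, hv, rfl⟩
  exact (csInf_le (tourCosts_finite d _).bddBelow hmem).trans (cycleCost_dedup_map_le htri hdc l)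

theorem stmt_3_general {V : Type*} [Fintype V] [DecidableEq V] (c : V → V → ℝ)
    (htri : ∀ u v w : V, c u w ≤ c u v + c v w)
    (m : ℕ) (S : Fin m → Finset V)
    (hdisj : ∀ i j, i ≠ j → Disjoint (S i) (S j))
    (hne : ∀ i, (S i).Nonempty)
    (hcover : ∀ v : V, ∃ i, v ∈ S i)
    (d : Fin m → Fin m → ℝ)
    (hd : ∀ i j, d i j = sInf {x | ∃ u ∈ S i, ∃ v ∈ S j, c u v = x}) :
    sInf (tourCosts d Finset.univ) ≤ sInf (tourCosts c Finset.univ) := by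
  choose f hf using hcover
  have hf_surj : Function.Surjective f := fun i => by
    obtain ⟨v, hv⟩ := hne i
    refine ⟨v, by_contra fun h => ?_⟩
    exact Finset.disjoint_left.1 (hdisj _ _ h) (hf v) hv
  have hdc : ∀ u v, d (f u) (f v) ≤ c u v := fun u v => by
    rw [hd]
    have hfin : {x | ∃ p ∈ S (f u), ∃ q ∈ S (f v), c p q = x}.Finite :=
      ((S (f u)).finite_toSet.image2 c (S (f v)).finite_toSet).subset
        fun _ ⟨p, hp, q, hq, hx⟩ => ⟨p, hp, q, hq, hx⟩
    exact csInf_le hfin.bddBelow ⟨u, hf u, v, hf v, rfl⟩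
  exact sInf_tourCosts_le_of_surjective htri hdc hf_surj

/-- contracting a metric ATSP instance along a partition
(with min cross-pair costs) does not increase the minimum tour cost. -/
theorem stmt_3 {V : Type*} [Fintype V] [DecidableEq V] (c : V → V → ℝ)
    (hnn : ∀ u v : V, 0 ≤ c u v)
    (htri : ∀ u v w : V, c u w ≤ c u v + c v w)
    (m : ℕ) (S : Fin m → Finset V)
    (hdisj : ∀ i j, i ≠ j → Disjoint (S i) (S j))
    (hne : ∀ i, (S i).Nonempty)
    (hcover : ∀ v : V, ∃ i, v ∈ S i)
    (d : Fin m → Fin m → ℝ)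
    (hd : ∀ i j, d i j = sInf {x | ∃ u ∈ S i, ∃ v ∈ S j, c u v = x}) :
    sInf (tourCosts d Finset.univ) ≤ sInf (tourCosts c Finset.univ) :=
  stmt_3_general c htri m S hdisj hne hcover d hd
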